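/- Let T be a sub-n-normal operator on a Hilbert space H, and suppose that Tᵐ is n-quasinormal for some integer m > 1. Then T is n-quasinormal. -/
import Mathlib

open scoped NNReal InnerProductSpace

section CommutePow

variable {A : Type*} [CStarAlgebra A]

lemma cfc_mem_elemental' (a : A) (ha : IsStarNormal a) (f : ℂ → ℂ)
    (hf : ContinuousOn f (spectrum ℂ a)) :
    cfc f a ∈ StarAlgebra.elemental ℂ a := by
  rw [cfc_apply f a ha hf, cfcHom_eq_of_isStarNormal, StarAlgHom.comp_apply]
  exact ((continuousFunctionalCalculus a) _).property

lemma commute_cfc_of_commute' {a b : A} (ha : IsSelfAdjoint a) (hb : Commute b a) (f : ℂ → ℂ) :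
    Commute b (cfc f a) := by
  have ha' : IsStarNormal a := ha.isStarNormal
  by_cases hf : ContinuousOn f (spectrum ℂ a)
  · have hmem := cfc_mem_elemental' a ha' f hf
    refine StarAlgebra.elemental.induction_on (R := ℂ) (P := fun u _ => Commute b u) hmem hb ?_ ?_ ?_ ?_ ?_
    · simpa only [ha.star_eq] using hb
    · intro r; exact (Algebra.commutes r b).symm
    · intro u _ v _ h1 h2; exact h1.add_right h2
    · intro u _ v _ h1 h2; exact h1.mul_right h2
    · intro s hs hcomm v hv
      have hcl : IsClosed {u : A | b * u = u * b} :=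
        isClosed_eq (continuous_mul_left b) (continuous_mul_right b)
      exact closure_minimal (fun u hu => hcomm u hu) hcl hv
  · rw [cfc_apply_of_not_continuousOn a hf]; exact Commute.zero_right b

set_option maxHeartbeats 1000000 in
lemma commute_of_commute_pow' [PartialOrder A] [StarOrderedRing A] {a b : A} (ha : 0 ≤ a)
    {m : ℕ} (hm : m ≠ 0) (h : Commute b (a ^ m)) : Commute b a := by
  have hsa : IsSelfAdjoint a := .of_nonneg ha
  have hsam : IsSelfAdjoint (a ^ m) := hsa.pow m
  set f : ℂ → ℂ := fun z => ((z.re ^ (m⁻¹ : ℝ) : ℝ) : ℂ) with hfdef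
  have hf : Continuous f := Complex.continuous_ofReal.comp
    ((Real.continuous_rpow_const (by positivity)).comp Complex.continuous_re)
  have key : cfc f (a ^ m) = a := by
    have h1 : a ^ m = cfc (fun z : ℂ => z ^ m) a := (cfc_pow_id a m).symm
    rw [h1, ← cfc_comp' f (· ^ m) a (hf.continuousOn)]
    have h2 : cfc (fun x : ℂ => f (x ^ m)) a = cfc (id : ℂ → ℂ) a := by
      apply cfc_congr
      intro z hz
      have hz1 : ((z.re : ℝ) : ℂ) = z := hsa.spectrumRestricts.rightInvOn hz
      have hz2 : (0:ℝ) ≤ z.re :=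
        spectrum_nonneg_of_nonneg ha (hsa.spectrumRestricts.apply_mem hz)
      have hzm : z ^ m = ((z.re ^ m : ℝ) : ℂ) := by
        conv_lhs => rw [← hz1]
        norm_cast
      simp only [Function.comp_apply, hfdef, hzm, id_eq]
      rw [Complex.ofReal_re, ← Real.rpow_natCast z.re m, ← Real.rpow_mul hz2,
        mul_inv_cancel₀ (by exact_mod_cast hm), Real.rpow_one, hz1]
    rw [h2, cfc_id ℂ a]
  rw [← key]
  exact commute_cfc_of_commute' hsam h f

end CommutePow

/-- `T` is sub-n-normal if it is the restriction of an n-normal operator to an invariant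
subspace. -/
def SubNNormal (n : ℕ) {H : Type*} [NormedAddCommGroup H] [InnerProductSpace ℂ H]
    [CompleteSpace H] (T : H →L[ℂ] H) : Prop :=
  ∃ (K : Type) (_ : NormedAddCommGroup K) (_ : InnerProductSpace ℂ K) (_ : CompleteSpace K)
    (V : H →ₗᵢ[ℂ] K) (S : K →L[ℂ] K),
    IsStarNormal (S ^ n) ∧ ∀ x : H, S (V x) = V (T x)

/-- `T` is n-quasinormal if `Tⁿ` is quasinormal, i.e. `Tⁿ` commutes with `T*ⁿTⁿ`. -/
def NQuasinormal (n : ℕ) {H : Type*} [NormedAddCommGroup H] [InnerProductSpace ℂ H]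
    [CompleteSpace H] (T : H →L[ℂ] H) : Prop :=
  T ^ n * (star (T ^ n) * T ^ n) = (star (T ^ n) * T ^ n) * T ^ n

/-- If `T` is sub-n-normal and `Tᵐ` is n-quasinormal for some integer `m > 1`, then `T` is
n-quasinormal. -/
theorem nQuasinormal_of_pow_nQuasinormal
    {H : Type*} [NormedAddCommGroup H] [InnerProductSpace ℂ H] [CompleteSpace H]
    (n m : ℕ) (T : H →L[ℂ] H) (hT : SubNNormal n T) (hm : 1 < m)
    (hq : NQuasinormal n (T ^ m)) :
    NQuasinormal n T := by
  obtain ⟨K, _, _, _, V, S, hSN, hSV⟩ := hT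
  have hm0 : m ≠ 0 := by omega
  set Vc : H →L[ℂ] K := V.toContinuousLinearMap with hVcdef
  have hVcx : ∀ x, Vc x = V x := fun _ => rfl
  set W : K →L[ℂ] H := ContinuousLinearMap.adjoint Vc with hWdef
  -- basic inner-product facts
  have hWin : ∀ (u : K) (y : H), ⟪W u, y⟫_ℂ = ⟪u, Vc y⟫_ℂ := fun u y =>
    ContinuousLinearMap.adjoint_inner_left Vc y u
  have hWin2 : ∀ (u : K) (z : H), ⟪u, Vc z⟫_ℂ = ⟪W u, z⟫_ℂ := fun u z =>
    (ContinuousLinearMap.adjoint_inner_left Vc z u).symm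
  have hVin : ∀ (y : H) (u : K), ⟪Vc y, u⟫_ℂ = ⟪y, W u⟫_ℂ := fun y u =>
    (ContinuousLinearMap.adjoint_inner_right Vc y u).symm
  have hVV : ∀ x y : H, ⟪Vc x, Vc y⟫_ℂ = ⟪x, y⟫_ℂ := fun x y => by
    rw [hVcx, hVcx]; exact V.inner_map_map x y
  have pw2 : ∀ x : H, W (Vc x) = x := by
    intro x
    apply ext_inner_right ℂ
    intro y
    rw [hWin, hVV]
  -- intertwining
  have pw1 : ∀ (k : ℕ) (x : H), (S ^ k) (Vc x) = Vc ((T ^ k) x) := by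
    intro k
    induction k with
    | zero => intro x; simp
    | succ k ih =>
      intro x
      rw [pow_succ', pow_succ', ContinuousLinearMap.mul_apply, ContinuousLinearMap.mul_apply,
        ih x, hVcx, hVcx, hSV]
  -- compression formula
  have pwQ : ∀ (k : ℕ) (x : H),
      (star (T ^ k) * T ^ k) x = W ((star (S ^ k) * S ^ k) (Vc x)) := by
    intro k x
    apply ext_inner_right ℂ
    intro y
    rw [ContinuousLinearMap.mul_apply, ContinuousLinearMap.star_eq_adjoint,
      ContinuousLinearMap.adjoint_inner_left, hWin, ContinuousLinearMap.mul_apply,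
      ContinuousLinearMap.star_eq_adjoint, ContinuousLinearMap.adjoint_inner_left,
      pw1, pw1, hVV]
  set N : K →L[ℂ] K := S ^ n with hNdef
  have hCN : Commute (star N) N := hSN.star_comm_self
  set R2 : K →L[ℂ] K := star N * N with hR2def
  have hNj : ∀ j : ℕ, star (S ^ (n * j)) * S ^ (n * j) = R2 ^ j := by
    intro j
    rw [pow_mul, ← hNdef, star_pow, ← hCN.mul_pow]
  have pwQj : ∀ (j : ℕ) (x : H),
      (star (T ^ (n * j)) * T ^ (n * j)) x = W ((R2 ^ j) (Vc x)) := by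
    intro j x
    rw [pwQ, hNj]
  set X : K →L[ℂ] K := R2 ^ m with hXdef
  have hR2sa : IsSelfAdjoint R2 := IsSelfAdjoint.of_nonneg (star_mul_self_nonneg N)
  have hXsa : IsSelfAdjoint X := hR2sa.pow m
  have hXin : ∀ u v : K, ⟪X u, v⟫_ℂ = ⟪u, X v⟫_ℂ := by
    intro u v
    nth_rewrite 1 [← hXsa.star_eq]
    rw [ContinuousLinearMap.star_eq_adjoint, ContinuousLinearMap.adjoint_inner_left]
  -- translate the quasinormality hypothesis
  set C : H →L[ℂ] H := (T ^ m) ^ n with hCdef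
  have hCpow : C = T ^ (n * m) := by rw [hCdef, ← pow_mul, mul_comm]
  have hC2pow : C ^ 2 = T ^ (n * (m * 2)) := by
    rw [hCpow, ← pow_mul, mul_assoc]
  have hqC : C * (star C * C) = (star C * C) * C := hq
  have hCC : star (C ^ 2) * C ^ 2 = (star C * C) * (star C * C) := by
    rw [pow_two, star_mul]
    calc star C * star C * (C * C) = star C * ((star C * C) * C) := by
          rw [mul_assoc, mul_assoc]
      _ = star C * (C * (star C * C)) := by rw [hqC]
      _ = (star C * C) * (star C * C) := by rw [← mul_assoc, mul_assoc]
  have pwQC : ∀ x : H, (star C * C) x = W (X (Vc x)) := by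
    intro x
    rw [hCpow, pwQj m x, hXdef]
  have hPt : ∀ x : H, W ((X * X) (Vc x)) = W (X (Vc (W (X (Vc x))))) := by
    intro x
    have h1 : (star (C ^ 2) * C ^ 2) x = W ((X * X) (Vc x)) := by
      rw [hC2pow, pwQj (m * 2) x, hXdef, ← pow_two, ← pow_mul]
    have h2 : ((star C * C) * (star C * C)) x = W (X (Vc (W (X (Vc x))))) := by
      rw [ContinuousLinearMap.mul_apply, pwQC, pwQC]
    rw [← h1, ← h2, hCC]
  -- the range of Vc is invariant under X
  have hInv : ∀ x : H, X (Vc x) = Vc (W (X (Vc x))) := by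
    intro x
    set u : K := X (Vc x) with hu
    have hWu : ⟪u, u⟫_ℂ = ⟪W u, W u⟫_ℂ := by
      calc ⟪u, u⟫_ℂ = ⟪Vc x, X u⟫_ℂ := by rw [hu, hXin]
        _ = ⟪x, W ((X * X) (Vc x))⟫_ℂ := by
            rw [hVin, ContinuousLinearMap.mul_apply]
        _ = ⟪x, W (X (Vc (W u)))⟫_ℂ := by rw [hPt]
        _ = ⟪Vc x, X (Vc (W u))⟫_ℂ := by rw [hVin]
        _ = ⟪u, Vc (W u)⟫_ℂ := by rw [hu, hXin]
        _ = ⟪W u, W u⟫_ℂ := by rw [hWin2]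
    have hz : ⟪u - Vc (W u), u - Vc (W u)⟫_ℂ = 0 := by
      rw [inner_sub_sub_self]
      have e1 : ⟪u, Vc (W u)⟫_ℂ = ⟪W u, W u⟫_ℂ := by rw [hWin2]
      have e2 : ⟪Vc (W u), u⟫_ℂ = ⟪W u, W u⟫_ℂ := by rw [hVin]
      have e3 : ⟪Vc (W u), Vc (W u)⟫_ℂ = ⟪W u, W u⟫_ℂ := hVV _ _
      rw [e1, e2, e3, ← hWu]
      ring
    have := inner_self_eq_zero.mp hz
    have h5 : u - Vc (W u) = 0 := this
    rw [sub_eq_zero] at h5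
    exact h5
  -- the projection onto the range of Vc commutes with X, hence with R2
  set P : K →L[ℂ] K := Vc.comp W with hPdef
  have hPapp : ∀ v : K, P v = Vc (W v) := fun _ => rfl
  have hPstar : star P = P := by
    rw [ContinuousLinearMap.star_eq_adjoint, hPdef, ContinuousLinearMap.adjoint_comp,
      hWdef, ContinuousLinearMap.adjoint_adjoint]
  have hXP1 : X * P = P * (X * P) := by
    ext v
    rw [ContinuousLinearMap.mul_apply, ContinuousLinearMap.mul_apply,
      ContinuousLinearMap.mul_apply, hPapp, hPapp, hInv (W v), pw2]
  have hXP : X * P = P * X := by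
    have h2 : P * X = (P * X) * P := by
      have := congrArg star hXP1
      rwa [star_mul, star_mul, star_mul, hPstar, hXsa.star_eq] at this
    rw [hXP1, ← mul_assoc, ← h2]
  have hComm : Commute P R2 :=
    commute_of_commute_pow' (star_mul_self_nonneg N) hm0 (by rw [← hXdef]; exact hXP.symm)
  -- conclude
  have hR2N : R2 * N = N * R2 := by
    conv_lhs => rw [hR2def, hCN.eq]
    rw [mul_assoc, ← hR2def]
  show T ^ n * (star (T ^ n) * T ^ n) = (star (T ^ n) * T ^ n) * T ^ n
  ext x
  have pwR2 : ∀ y : H, (star (T ^ n) * T ^ n) y = W (R2 (Vc y)) := by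
    intro y
    have := pwQj 1 y
    rw [mul_one, pow_one] at this
    exact this
  have hfix : R2 (Vc x) = Vc (W (R2 (Vc x))) := by
    have h1 : P (Vc x) = Vc x := by rw [hPapp, pw2]
    calc R2 (Vc x) = R2 (P (Vc x)) := by rw [h1]
      _ = (R2 * P) (Vc x) := rfl
      _ = (P * R2) (Vc x) := by rw [← hComm.eq]
      _ = Vc (W (R2 (Vc x))) := by rw [ContinuousLinearMap.mul_apply, hPapp]
  set w : H := W (R2 (Vc x)) with hw
  calc (T ^ n * (star (T ^ n) * T ^ n)) x = (T ^ n) w := by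
        rw [ContinuousLinearMap.mul_apply, pwR2]
    _ = W (Vc ((T ^ n) w)) := (pw2 _).symm
    _ = W (N (Vc w)) := by rw [← pw1 n w, hNdef]
    _ = W (N (R2 (Vc x))) := by rw [hfix]
    _ = W ((N * R2) (Vc x)) := rfl
    _ = W ((R2 * N) (Vc x)) := by rw [hR2N]
    _ = W (R2 (N (Vc x))) := rfl
    _ = W (R2 (Vc ((T ^ n) x))) := by rw [hNdef, pw1 n x]
    _ = (star (T ^ n) * T ^ n) ((T ^ n) x) := (pwR2 _).symm
    _ = ((star (T ^ n) * T ^ n) * T ^ n) x := rfl
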